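/- arXiv:2601.15680 — 2 statements merged into one kernel-verified Lean document; each statement's English description precedes it below -/
import Mathlib

section
/- Let p ≥ 5 be a prime and let r be an integer with 1 ≤ r ≤ p-1 such that 4r+1 is a quadratic non-residue modulo p. Then for all integers n ≥ 0 and all integers k ≥ j ≥ 0, a_{p(k-j)+(p-3), pk+p}(pn+r) ≡ 0 (mod p). -/
/-- `colorPart r s n` is the number `a_{r,s}(n)` of partitions of `n` in which even parts
may appear in any of `r` colors and odd parts in any of `s` colors, realized as the
coefficient of `q^n` in `∏_{m ≥ 1} (1 - q^{2m-1})^{-s} (1 - q^{2m})^{-r}` over `ℤ`.  Since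
the factors with `2m - 1 > n` do not affect the coefficient of `q^n`, this coefficient
equals the coefficient of `q^n` in the finite product of the factors for `1 ≤ m ≤ n + 1`. -/
noncomputable def colorPart (r s n : ℕ) : ℤ :=
  PowerSeries.coeff (R := ℤ) n
    (∏ m ∈ Finset.range (n + 1),
      (PowerSeries.invOfUnit (1 - PowerSeries.X ^ (2 * m + 1)) 1) ^ s *
      (PowerSeries.invOfUnit (1 - PowerSeries.X ^ (2 * m + 2)) 1) ^ r)

/-!
With `s = p(k+1)` and `r' + 3 = p(k-j+1)`, the generating function
`∏ (1 - q^{2m-1})^{-s} (1 - q^{2m})^{-r'}` equals `F^p · ∏ (1 - q^{2m})^3` for a power series `F`,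
and modulo `p` the coefficients of a `p`-th power vanish off the multiples of `p` (Frobenius).
By Jacobi's identity `∏ (1 - q^{2m})^3 = ∑_{l ≥ 0} (-1)^l (2l+1) q^{l(l+1)}`, the coefficient of
`q^{pn+r}` can therefore only pick up exponents `b = l(l+1) ≡ r (mod p)`, and then
`(2l+1)^2 = 4b + 1 ≡ 4r + 1` would be a square.

Jacobi's identity is proved modulo `x^n` from the finite triple product
`∏_{m<n} (1 - x^{m+1} y)(y - x^m) = ∑_k (-1)^{n+k} x^{T(k-n)} [2n, k]_x y^k`: its derivative at
`y = 1` is `(x;x)_n (x;x)_{n-1}`, and `(x;x)_n [2n, k]_x ≡ 1` modulo a power of `x` large enough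
to leave each term `x^{T(k-n)}` intact below `x^n`.
-/

open Finset

def triangle (m : ℤ) : ℕ := (m * (m + 1) / 2).toNat

lemma two_mul_triangle (m : ℤ) : 2 * (triangle m : ℤ) = m * (m + 1) := by
  have hnn : 0 ≤ m * (m + 1) := by rcases le_or_gt 0 m with h | h <;> nlinarith
  rw [triangle, Int.toNat_of_nonneg (Int.ediv_nonneg hnn (by norm_num)),
    Int.mul_ediv_cancel' (Int.even_mul_succ_self m).two_dvd]

lemma triangle_add_one (m : ℤ) : (triangle (m + 1) : ℤ) = triangle m + m + 1 := by
  linarith [two_mul_triangle m, two_mul_triangle (m + 1)]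

lemma abs_le_triangle_add_one (m : ℤ) : |m| ≤ triangle m + 1 := by
  have h := two_mul_triangle m
  rcases abs_cases m with ⟨hm, -⟩ | ⟨hm, hneg⟩
  · nlinarith [sq_nonneg (m - 1)]
  · rcases eq_or_lt_of_le (show m ≤ -1 by omega) with rfl | hlt
    · norm_num
    · nlinarith

lemma ne_mul_add_one_of_modEq {p r b : ℤ} (hqnr : ∀ x : ℤ, ¬ x ^ 2 ≡ 4 * r + 1 [ZMOD p])
    (hb : b ≡ r [ZMOD p]) (m : ℤ) : b ≠ m * (m + 1) := by
  rintro rfl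
  refine hqnr (2 * m + 1) ?_
  convert (hb.mul_left 4).add_right 1 using 1
  ring

section JacobiIdentity

variable {S : Type*} [CommRing S] (x : S)

def gaussBinom : ℕ → ℕ → S
  | _, 0 => 1
  | 0, _ + 1 => 0
  | n + 1, k + 1 => gaussBinom n k + x ^ (k + 1) * gaussBinom n (k + 1)

def qPochhammer (n : ℕ) : S := ∏ i ∈ range n, (1 - x ^ (i + 1))

@[simp] lemma gaussBinom_zero_right (n : ℕ) : gaussBinom x n 0 = 1 := by
  cases n <;> rfl

@[simp] lemma gaussBinom_zero_succ (k : ℕ) : gaussBinom x 0 (k + 1) = 0 := rfl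

lemma gaussBinom_succ_succ (n k : ℕ) :
    gaussBinom x (n + 1) (k + 1) = gaussBinom x n k + x ^ (k + 1) * gaussBinom x n (k + 1) :=
  rfl

lemma gaussBinom_eq_zero_of_lt {n k : ℕ} (h : n < k) : gaussBinom x n k = 0 := by
  induction n generalizing k with
  | zero =>
    obtain ⟨k, rfl⟩ := Nat.exists_eq_add_one_of_ne_zero (show k ≠ 0 by omega)
    rfl
  | succ n ih =>
    obtain ⟨k, rfl⟩ := Nat.exists_eq_add_one_of_ne_zero (show k ≠ 0 by omega)
    rw [gaussBinom_succ_succ, ih (by omega), ih (by omega), mul_zero, add_zero]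

@[simp] lemma gaussBinom_self (n : ℕ) : gaussBinom x n n = 1 := by
  induction n with
  | zero => rfl
  | succ n ih =>
    rw [gaussBinom_succ_succ, ih, gaussBinom_eq_zero_of_lt x (by omega), mul_zero, add_zero]

lemma gaussBinom_succ_succ' (n k : ℕ) :
    gaussBinom x (n + 1) (k + 1) = gaussBinom x n (k + 1) + x ^ (n - k) * gaussBinom x n k := by
  induction n generalizing k with
  | zero => cases k <;> simp [gaussBinom_succ_succ]
  | succ n ih =>
    rcases k with _ | k
    · conv_lhs => rw [gaussBinom_succ_succ, ih]
      conv_rhs => rw [gaussBinom_succ_succ x n 0]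
      simp only [gaussBinom_zero_right, Nat.sub_zero]
      ring
    · conv_lhs => rw [gaussBinom_succ_succ, ih, ih]
      conv_rhs => rw [gaussBinom_succ_succ x n (k + 1), gaussBinom_succ_succ x n k]
      rcases le_or_gt (k + 1) n with hk | hk
      · obtain ⟨d, rfl⟩ := Nat.exists_eq_add_of_le hk
        rw [show k + 1 + d - (k + 1) = d by omega, show k + 1 + d + 1 - (k + 1) = d + 1 by omega,
          show k + 1 + d - k = d + 1 by omega]
        ring
      · rw [gaussBinom_eq_zero_of_lt x hk, Nat.add_sub_add_right]
        ring

lemma gaussBinom_add_two_add_two (n k : ℕ) :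
    gaussBinom x (n + 2) (k + 2) = (1 + x ^ (n + 1)) * gaussBinom x n (k + 1) +
      x ^ (k + 2) * gaussBinom x n (k + 2) + x ^ (n - k) * gaussBinom x n k := by
  rw [gaussBinom_succ_succ, gaussBinom_succ_succ', gaussBinom_succ_succ']
  rcases le_or_gt (k + 1) n with hk | hk
  · obtain ⟨d, rfl⟩ := Nat.exists_eq_add_of_le hk
    rw [show k + 1 + d - (k + 1) = d by omega, show k + 1 + d - k = d + 1 by omega]
    ring
  · rw [gaussBinom_eq_zero_of_lt x hk]
    ring

lemma gaussBinom_add_two_one (n : ℕ) :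
    gaussBinom x (n + 2) 1 = 1 + x ^ (n + 1) + x * gaussBinom x n 1 := by
  rw [gaussBinom_succ_succ, gaussBinom_succ_succ']
  simp only [gaussBinom_zero_right, Nat.sub_zero]
  ring

lemma gaussBinom_mul_qPochhammer {n k : ℕ} (h : k ≤ n) :
    gaussBinom x n k * qPochhammer x (n - k) = ∏ i ∈ Ico k n, (1 - x ^ (i + 1)) := by
  induction n generalizing k with
  | zero =>
    obtain rfl : k = 0 := by omega
    simp [qPochhammer]
  | succ n ih =>
    rcases k with _ | k
    · rw [gaussBinom_zero_right, one_mul, Nat.sub_zero, qPochhammer, range_eq_Ico]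
    obtain rfl | hk : k = n ∨ k < n := by omega
    · simp [qPochhammer]
    obtain ⟨d, rfl⟩ := Nat.exists_eq_add_of_lt hk
    have h1 := ih (k := k) (by omega)
    have h2 := ih (k := k + 1) (by omega)
    have hq : qPochhammer x (d + 1) = qPochhammer x d * (1 - x ^ (d + 1)) := prod_range_succ _ _
    have hA := prod_eq_prod_Ico_succ_bot (show k < k + d + 1 by omega) fun i ↦ 1 - x ^ (i + 1)
    have hB := prod_Ico_succ_top (show k + 1 ≤ k + d + 1 by omega) fun i ↦ 1 - x ^ (i + 1)
    rw [show k + d + 1 - k = d + 1 by omega] at h1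
    rw [show k + d + 1 - (k + 1) = d by omega] at h2
    rw [gaussBinom_succ_succ, show k + d + 1 + 1 - (k + 1) = d + 1 by omega]
    linear_combination h1 + x ^ (k + 1) * gaussBinom x (k + d + 1) (k + 1) * hq +
      x ^ (k + 1) * (1 - x ^ (d + 1)) * h2 + hA - hB

def jacobiWeight (n k : ℕ) : S := (-1) ^ (n + k) * x ^ triangle (k - n)

lemma jacobiWeight_succ_succ (n k : ℕ) :
    jacobiWeight x (n + 1) (k + 1) = jacobiWeight x n k := by
  simp only [jacobiWeight, Nat.cast_add, Nat.cast_one, add_sub_add_right_eq_sub]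
  ring

lemma jacobiWeight_succ_zero (n : ℕ) :
    jacobiWeight x (n + 1) 0 = -(x ^ n * jacobiWeight x n 0) := by
  have h := triangle_add_one (-(n + 1 : ℤ))
  rw [show -(n + 1 : ℤ) + 1 = -n by ring] at h
  simp only [jacobiWeight, Nat.cast_zero, zero_sub, Nat.cast_add, Nat.cast_one]
  rw [show triangle (-(n + 1 : ℤ)) = n + triangle (-(n : ℤ)) by omega]
  ring

lemma pow_mul_jacobiWeight_succ (n k : ℕ) :
    x ^ n * jacobiWeight x n (k + 1) = -(x ^ (k + 1) * jacobiWeight x n k) := by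
  have h := triangle_add_one ((k : ℤ) - n)
  simp only [jacobiWeight, Nat.cast_add, Nat.cast_one]
  rw [show (k : ℤ) + 1 - n = k - n + 1 by ring, ← mul_assoc, mul_comm (x ^ n), mul_assoc,
    ← pow_add, show n + triangle ((k : ℤ) - n + 1) = k + 1 + triangle ((k : ℤ) - n) by omega]
  ring

lemma pow_succ_mul_jacobiWeight {n k : ℕ} (hk : k ≤ 2 * n) :
    x ^ (n + 1) * jacobiWeight x n k = -(x ^ (2 * n - k) * jacobiWeight x n (k + 1)) := by
  have h := triangle_add_one ((k : ℤ) - n)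
  simp only [jacobiWeight, Nat.cast_add, Nat.cast_one]
  rw [show (k : ℤ) + 1 - n = k - n + 1 by ring, ← mul_assoc, mul_comm (x ^ (n + 1)), mul_assoc,
    ← pow_add, ← mul_assoc, mul_comm (x ^ (2 * n - k)), mul_assoc, ← pow_add,
    show n + 1 + triangle ((k : ℤ) - n) = 2 * n - k + triangle ((k : ℤ) - n + 1) by omega]
  ring

section TripleProduct

open Polynomial

noncomputable def finiteTripleProduct (n : ℕ) : S[X] :=
  ∏ m ∈ range n, (1 - C (x ^ (m + 1)) * X) * (X - C (x ^ m))

lemma finiteTripleProduct_succ (n : ℕ) : finiteTripleProduct x (n + 1) =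
    finiteTripleProduct x n * C (1 + x ^ (2 * n + 1)) * X -
      finiteTripleProduct x n * C (x ^ n) - finiteTripleProduct x n * C (x ^ (n + 1)) * X ^ 2 := by
  have h : C (x ^ (2 * n + 1)) = C (x ^ (n + 1)) * C (x ^ n) := by
    rw [← C_mul, ← pow_add, show n + 1 + n = 2 * n + 1 by ring]
  rw [finiteTripleProduct, prod_range_succ, ← finiteTripleProduct, map_add, map_one]
  linear_combination (-(finiteTripleProduct x n * X)) * h

lemma coeff_finiteTripleProduct (n k : ℕ) :
    (finiteTripleProduct x n).coeff k = jacobiWeight x n k * gaussBinom x (2 * n) k := by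
  induction n generalizing k with
  | zero =>
    rcases k with _ | k <;> simp [finiteTripleProduct, jacobiWeight, triangle, coeff_one]
  | succ n ih =>
    rw [finiteTripleProduct_succ, show 2 * (n + 1) = 2 * n + 2 by ring]
    rcases k with _ | _ | k
    · simp only [coeff_sub, coeff_mul_X_zero, coeff_mul_X_pow', coeff_mul_C, ih,
        gaussBinom_zero_right, mul_one, zero_sub, nonpos_iff_eq_zero, OfNat.ofNat_ne_zero,
        ↓reduceIte, sub_zero, jacobiWeight_succ_zero, neg_inj]
      ring
    · simp only [coeff_sub, coeff_mul_X, coeff_mul_X_pow', coeff_mul_C, ih]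
      have e := pow_mul_jacobiWeight_succ x n 0
      simp only [jacobiWeight_succ_succ, gaussBinom_zero_right, zero_add, pow_one, mul_one,
        Nat.not_ofNat_le_one, ↓reduceIte, sub_zero, gaussBinom_add_two_one] at e ⊢
      linear_combination (-gaussBinom x (2 * n) 1) * e
    · simp only [coeff_sub, coeff_mul_X, coeff_mul_X_pow', coeff_mul_C, ih, jacobiWeight_succ_succ,
        gaussBinom_add_two_add_two, if_pos (show 2 ≤ k + 2 by omega),
        show k + 1 + 1 - 2 = k from rfl]
      have e2 := pow_mul_jacobiWeight_succ x n (k + 1)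
      rcases le_or_gt k (2 * n) with hk | hk
      · have e3 := pow_succ_mul_jacobiWeight x hk
        linear_combination (-gaussBinom x (2 * n) (k + 2)) * e2 - gaussBinom x (2 * n) k * e3
      · simp only [gaussBinom_eq_zero_of_lt x hk,
          gaussBinom_eq_zero_of_lt x (show 2 * n < k + 1 by omega),
          gaussBinom_eq_zero_of_lt x (show 2 * n < k + 2 by omega)]
        ring

lemma finiteTripleProduct_succ_eq_X_sub_one_mul (N : ℕ) : finiteTripleProduct x (N + 1) =
    (X - 1) * ((∏ m ∈ range (N + 1), (1 - C (x ^ (m + 1)) * X)) *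
      ∏ m ∈ range N, (X - C (x ^ (m + 1)))) := by
  rw [finiteTripleProduct, prod_mul_distrib, prod_range_succ' (fun m ↦ X - C (x ^ m)), pow_zero,
    map_one]
  ring

lemma sum_mul_coeff_finiteTripleProduct (N : ℕ) :
    ∑ k ∈ range (2 * (N + 1) + 1), (k : S) * (finiteTripleProduct x (N + 1)).coeff k =
      qPochhammer x (N + 1) * qPochhammer x N := by
  have hdeg : (finiteTripleProduct x (N + 1)).natDegree < 2 * (N + 1) + 1 := by
    rw [Nat.lt_succ_iff, natDegree_le_iff_coeff_eq_zero]
    intro k hk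
    rw [coeff_finiteTripleProduct, gaussBinom_eq_zero_of_lt x hk, mul_zero]
  have h := derivative_eval (finiteTripleProduct x (N + 1)) 1
  rw [sum_over_range' _ (by simp) _ hdeg] at h
  simp only [one_pow, mul_one] at h
  rw [sum_congr rfl fun k _ ↦ mul_comm _ _, ← h, finiteTripleProduct_succ_eq_X_sub_one_mul,
    derivative_mul]
  simp [eval_prod, qPochhammer]

end TripleProduct

lemma dvd_mul_sub_one {d a b : S} (ha : d ∣ a - 1) (hb : d ∣ b - 1) : d ∣ a * b - 1 := by
  rw [show a * b - 1 = a * (b - 1) + (a - 1) by ring]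
  exact dvd_add (dvd_mul_of_dvd_right hb a) ha

lemma dvd_prod_sub_one {ι : Type*} {s : Finset ι} {f : ι → S} {d : S}
    (h : ∀ i ∈ s, d ∣ f i - 1) : d ∣ ∏ i ∈ s, f i - 1 :=
  prod_induction f (fun a ↦ d ∣ a - 1) (fun _ _ ↦ dvd_mul_sub_one) (by simp) h

lemma dvd_sub_one_of_mul_eq {d a b c : S} (hb : d ∣ b - 1) (hc : d ∣ c - 1) (h : a * b = c) :
    d ∣ a - 1 := by
  rw [show a - 1 = (c - 1) - a * (b - 1) by rw [← h]; ring]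
  exact dvd_sub hc (dvd_mul_of_dvd_right hb a)

lemma pow_dvd_prod_Ico_one_sub_pow_sub_one {M l u : ℕ} (h : M ≤ l + 1) :
    x ^ M ∣ ∏ i ∈ Ico l u, (1 - x ^ (i + 1)) - 1 := by
  refine dvd_prod_sub_one fun i hi ↦ ?_
  rw [sub_sub_cancel_left, dvd_neg]
  exact pow_dvd_pow x (by have := (mem_Ico.1 hi).1; omega)

lemma pow_dvd_qPochhammer_mul_gaussBinom_sub_one {n k : ℕ} (hk : k ≤ 2 * n) :
    x ^ (min k (2 * n - k) + 1) ∣ qPochhammer x n * gaussBinom x (2 * n) k - 1 := by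
  have hg := gaussBinom_mul_qPochhammer x hk
  rcases le_total n k with hnk | hkn
  · have hP := prod_range_mul_prod_Ico (fun i ↦ 1 - x ^ (i + 1)) (show 2 * n - k ≤ n by omega)
    rw [← qPochhammer, ← qPochhammer] at hP
    rw [show qPochhammer x n * gaussBinom x (2 * n) k =
        (∏ i ∈ Ico (2 * n - k) n, (1 - x ^ (i + 1))) * ∏ i ∈ Ico k (2 * n), (1 - x ^ (i + 1)) by
      rw [← hP, ← hg]; ring]
    exact dvd_mul_sub_one (pow_dvd_prod_Ico_one_sub_pow_sub_one x (by omega))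
      (pow_dvd_prod_Ico_one_sub_pow_sub_one x (by omega))
  · have hP := prod_range_mul_prod_Ico (fun i ↦ 1 - x ^ (i + 1)) (show n ≤ 2 * n - k by omega)
    rw [← qPochhammer, ← qPochhammer] at hP
    refine dvd_sub_one_of_mul_eq
      (pow_dvd_prod_Ico_one_sub_pow_sub_one x (l := n) (u := 2 * n - k) (by omega))
      (pow_dvd_prod_Ico_one_sub_pow_sub_one x (l := k) (u := 2 * n) (by omega)) ?_
    rw [← hg, ← hP]
    ring

lemma pow_dvd_pow_triangle_mul_qPochhammer_mul_gaussBinom_sub_one {n k : ℕ} (hk : k ≤ 2 * n) :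
    x ^ n ∣ x ^ triangle (k - n) * (qPochhammer x n * gaussBinom x (2 * n) k - 1) := by
  have hT := abs_le_triangle_add_one ((k : ℤ) - n)
  have h1 := le_abs_self ((k : ℤ) - n)
  have h2 := neg_abs_le ((k : ℤ) - n)
  refine (pow_dvd_pow x (show n ≤ triangle (k - n) + (min k (2 * n - k) + 1) by omega)).trans ?_
  rw [pow_add]
  exact mul_dvd_mul_left _ (pow_dvd_qPochhammer_mul_gaussBinom_sub_one x hk)

/-- Jacobi's identity `(x;x)_∞^3 = ∑_{l ≥ 0} (-1)^l (2l+1) x^{T(l)}` modulo `x^n`: the terms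
`k = n + l` and `k = n - 1 - l` of the sum combine to `(-1)^l (2l+1) x^{T(l)}`. -/
theorem pow_dvd_qPochhammer_pow_three_sub_sum (n : ℕ) :
    x ^ n ∣ qPochhammer x n ^ 3 - ∑ k ∈ range (2 * n + 1), (k : S) * jacobiWeight x n k := by
  rcases n with _ | N
  · simp
  set n := N + 1
  have hP : qPochhammer x n = qPochhammer x N * (1 - x ^ n) := prod_range_succ _ _
  have hsum : ∑ k ∈ range (2 * n + 1),
      (k : S) * jacobiWeight x n k * (qPochhammer x n * gaussBinom x (2 * n) k) =
        qPochhammer x n ^ 2 * qPochhammer x N := by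
    have hD := sum_mul_coeff_finiteTripleProduct x N
    simp only [coeff_finiteTripleProduct] at hD
    rw [sq, mul_assoc, ← hD, mul_sum]
    exact sum_congr rfl fun _ _ ↦ by ring
  have hsplit : qPochhammer x n ^ 3 - ∑ k ∈ range (2 * n + 1), (k : S) * jacobiWeight x n k =
      ∑ k ∈ range (2 * n + 1), (k : S) * jacobiWeight x n k *
        (qPochhammer x n * gaussBinom x (2 * n) k - 1) -
      x ^ n * (qPochhammer x n ^ 2 * qPochhammer x N) := by
    simp only [mul_sub_one, sum_sub_distrib, hsum]
    linear_combination qPochhammer x n ^ 2 * hP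
  rw [hsplit]
  refine dvd_sub (dvd_sum fun k hk ↦ ?_) (dvd_mul_right _ _)
  rw [jacobiWeight, mul_assoc, mul_assoc]
  exact dvd_mul_of_dvd_right (dvd_mul_of_dvd_right
    (pow_dvd_pow_triangle_mul_qPochhammer_mul_gaussBinom_sub_one x (mem_range_succ_iff.1 hk)) _) _

end JacobiIdentity

section PowerSeries

open PowerSeries

variable {R : Type*} [CommRing R]

theorem coeff_prod_one_sub_X_pow_pow_three_eq_zero {n b : ℕ} (hb : b < n)
    (htri : ∀ m : ℤ, 2 * (b : ℤ) ≠ m * (m + 1)) :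
    coeff b ((∏ i ∈ range n, (1 - X ^ (i + 1) : R⟦X⟧)) ^ 3) = 0 := by
  obtain ⟨q, hq⟩ := pow_dvd_qPochhammer_pow_three_sub_sum (X : R⟦X⟧) n
  rw [qPochhammer, sub_eq_iff_eq_add] at hq
  rw [hq, map_add, coeff_X_pow_mul', if_neg (by omega), zero_add, map_sum]
  refine sum_eq_zero fun k _ ↦ ?_
  rw [jacobiWeight, ← mul_assoc,
    show (k : R⟦X⟧) * (-1) ^ (n + k) = C ((k : R) * (-1) ^ (n + k)) by simp,
    coeff_C_mul_X_pow, if_neg]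
  intro h
  exact htri (k - n) (by rw [h, two_mul_triangle])

theorem coeff_prod_one_sub_X_pow_two_mul_pow_three_eq_zero {n b : ℕ} (hb : b < 2 * n)
    (htri : ∀ m : ℤ, (b : ℤ) ≠ m * (m + 1)) :
    coeff b ((∏ i ∈ range n, (1 - X ^ (2 * i + 2) : R⟦X⟧)) ^ 3) = 0 := by
  have hexp : ∏ i ∈ range n, (1 - X ^ (2 * i + 2) : R⟦X⟧) =
      expand 2 two_ne_zero (∏ i ∈ range n, (1 - X ^ (i + 1))) := by
    simp [map_prod, ← pow_mul, mul_add]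
  rw [hexp, ← map_pow, coeff_expand]
  split_ifs with h2
  · obtain ⟨c, rfl⟩ := h2
    rw [Nat.mul_div_cancel_left _ two_pos]
    exact coeff_prod_one_sub_X_pow_pow_three_eq_zero (by omega) fun m hm ↦
      htri m (by push_cast; exact hm)
  · rfl

theorem coeff_pow_char_eq_zero (p : ℕ) [ExpChar R p] (f : R⟦X⟧) {n : ℕ} (hn : ¬ p ∣ n) :
    coeff n (f ^ p) = 0 := by
  have hp : p ≠ 0 := expChar_ne_zero R p
  have h : map (frobenius R p) (expand p hp f) = f ^ p := MvPowerSeries.map_frobenius_expand p hp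
  rw [← h, coeff_map, coeff_expand_of_not_dvd p hp f hn, map_zero]

theorem prime_dvd_coeff_pow {p : ℕ} (hp : p.Prime) (f : ℤ⟦X⟧) {n : ℕ} (hn : ¬ p ∣ n) :
    (p : ℤ) ∣ coeff n (f ^ p) := by
  have := Fact.mk hp
  rw [← ZMod.intCast_zmod_eq_zero_iff_dvd, ← eq_intCast (Int.castRingHom (ZMod p)), ← coeff_map,
    map_pow]
  exact coeff_pow_char_eq_zero p _ hn

lemma invOfUnit_one_sub_X_pow_pow {d e c t p : ℕ} (hd : d ≠ 0) (h : e + c = t * p) :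
    invOfUnit (1 - X ^ d : R⟦X⟧) 1 ^ e =
      (invOfUnit (1 - X ^ d) 1 ^ t) ^ p * (1 - X ^ d) ^ c := by
  have hinv : (1 - X ^ d : R⟦X⟧) * invOfUnit (1 - X ^ d) 1 = 1 :=
    mul_invOfUnit _ _ (by simp [zero_pow hd])
  calc invOfUnit (1 - X ^ d : R⟦X⟧) 1 ^ e
      = invOfUnit (1 - X ^ d : R⟦X⟧) 1 ^ e * ((1 - X ^ d) * invOfUnit (1 - X ^ d) 1) ^ c := by
        rw [hinv, one_pow, mul_one]
    _ = (invOfUnit (1 - X ^ d) 1 ^ t) ^ p * (1 - X ^ d) ^ c := by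
        rw [← pow_mul, ← h, pow_add, mul_pow, mul_comm ((1 - X ^ d) ^ c), ← mul_assoc]

lemma prod_invOfUnit_pow_eq_pow_mul_pow_three {N s e t p : ℕ} (h : e + 3 = t * p) :
    ∏ m ∈ range N,
        invOfUnit (1 - X ^ (2 * m + 1) : R⟦X⟧) 1 ^ (s * p) * invOfUnit (1 - X ^ (2 * m + 2)) 1 ^ e =
      (∏ m ∈ range N,
        invOfUnit (1 - X ^ (2 * m + 1) : R⟦X⟧) 1 ^ s * invOfUnit (1 - X ^ (2 * m + 2)) 1 ^ t) ^ p *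
      (∏ m ∈ range N, (1 - X ^ (2 * m + 2))) ^ 3 := by
  rw [← prod_pow, ← prod_pow, ← prod_mul_distrib]
  refine prod_congr rfl fun m _ ↦ ?_
  rw [invOfUnit_one_sub_X_pow_pow (d := 2 * m + 2) (by omega) h, pow_mul, mul_pow]
  ring

end PowerSeries

theorem stmt7_general (p : ℕ) (hp : p.Prime) (hp5 : 5 ≤ p)
    (r : ℕ)
    (hqnr : ∀ x : ℤ, ¬ x ^ 2 ≡ (4 * r + 1 : ℕ) [ZMOD p])
    (n j k : ℕ) :
    colorPart (p * (k - j) + (p - 3)) (p * k + p) (p * n + r) ≡ 0 [ZMOD p] := by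
  have hexp : p * (k - j) + (p - 3) + 3 = (k - j + 1) * p := by
    rw [add_mul, one_mul, mul_comm (k - j)]
    omega
  push_cast at hqnr
  rw [Int.modEq_zero_iff_dvd, colorPart, show p * k + p = (k + 1) * p by ring,
    prod_invOfUnit_pow_eq_pow_mul_pow_three hexp, PowerSeries.coeff_mul]
  refine dvd_sum fun ⟨i, b⟩ hib ↦ ?_
  rw [HasAntidiagonal.mem_antidiagonal] at hib
  dsimp only at hib ⊢
  by_cases hpi : p ∣ i
  · obtain ⟨t, rfl⟩ := hpi
    have hib' : (p * t + b : ℤ) = p * n + r := by exact_mod_cast hib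
    have hb : (b : ℤ) ≡ r [ZMOD p] := Int.modEq_iff_dvd.2 ⟨t - n, by linear_combination -hib'⟩
    rw [coeff_prod_one_sub_X_pow_two_mul_pow_three_eq_zero (by omega)
      (ne_mul_add_one_of_modEq hqnr hb), mul_zero]
    exact dvd_zero _
  · exact (prime_dvd_coeff_pow hp _ hpi).mul_right _

theorem stmt7 (p : ℕ) (hp : p.Prime) (hp5 : 5 ≤ p)
    (r : ℕ) (hr1 : 1 ≤ r) (hr2 : r ≤ p - 1)
    (hqnr : ∀ x : ℤ, ¬ x ^ 2 ≡ (4 * r + 1 : ℕ) [ZMOD p])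
    (n j k : ℕ) (hjk : j ≤ k) :
    colorPart (p * (k - j) + (p - 3)) (p * k + p) (p * n + r) ≡ 0 [ZMOD p] :=
  stmt7_general p hp hp5 r hqnr n j k
end

section
/- Let p ≥ 3 be a prime and let r be an integer with 1 ≤ r ≤ p-1 such that 8r+1 is a quadratic non-residue modulo p. Then for all integers n ≥ 0 and all integers k ≥ j ≥ 0, a_{p(k-j)+(p-1), pk+(p+1)}(pn+r) ≡ 0 (mod p). -/
/-!
Modulo `p`, `(1 - q^a)^{-p} ≡ (1 - q^{ap})^{-1}`, so the generating function of
`a_{p(k-j)+(p-1), pk+(p+1)}` is congruent to `F(q)^p · ψ(q)`, where `F(q)^p` only involves powers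
`q^{pm}` and `ψ(q) = (q²;q²)_∞ / (q;q²)_∞ = ∑_{t ≥ 0} q^{t(t+1)/2}` (Gauss). The coefficient of
`q^{pn+r}` therefore only sees coefficients of `ψ` at exponents `b ≡ r (mod p)`, and such a `b`
cannot be triangular: `b = t(t+1)/2` would give `8r + 1 ≡ (2t+1)²`.

Gauss's identity is obtained, in the truncated form needed here, from the finite Jacobi triple
product `∑_{i ≤ 2N} q^{T(i-N)} [2N, i]_q = (-1;q)_N (-q;q)_N`, where `T(x) = x(x+1)/2`: after
multiplying by `(q;q)_{2N}`, each summand is `q^{T(i-N)}` up to terms of degree `≥ N`, while the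
right-hand side is `2 (q²;q²)_N / (q;q²)_N` modulo `q^N`.
-/

open PowerSeries Finset

def triangular (x : ℤ) : ℕ := (x * (x + 1) / 2).toNat

lemma two_mul_triangular (x : ℤ) : 2 * (triangular x : ℤ) = x * (x + 1) := by
  have hnn : 0 ≤ x * (x + 1) := by rcases le_or_gt 0 x with h | h <;> nlinarith
  rw [triangular, Int.toNat_of_nonneg (Int.ediv_nonneg hnn (by norm_num)),
    Int.mul_ediv_cancel' (Int.even_mul_succ_self x).two_dvd]

lemma triangular_add_one (x : ℤ) : (triangular (x + 1) : ℤ) = triangular x + x + 1 := by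
  linarith [two_mul_triangular x, two_mul_triangular (x + 1)]

lemma abs_le_triangular_add_one (x : ℤ) : |x| ≤ triangular x + 1 := by
  have h := two_mul_triangular x
  rw [abs_le]
  constructor
  · rcases le_or_gt 0 (x + 1) with hx | hx <;> nlinarith
  · nlinarith

lemma sq_eq_eight_mul_triangular_add_one (x : ℤ) : (2 * x + 1) ^ 2 = 8 * triangular x + 1 := by
  linear_combination (-4) * two_mul_triangular x

lemma Finset.prod_range_two_mul {M : Type*} [CommMonoid M] (f : ℕ → M) (n : ℕ) :
    ∏ i ∈ range (2 * n), f i = (∏ i ∈ range n, f (2 * i)) * ∏ i ∈ range n, f (2 * i + 1) := by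
  induction n with
  | zero => simp
  | succ n ih =>
    rw [mul_add, mul_one, prod_range_succ, prod_range_succ, ih, prod_range_succ, prod_range_succ,
      mul_mul_mul_comm, mul_assoc]

lemma pow_mul_pow_eq_pow_mul {M : Type*} [CommMonoid M] {p : ℕ} (hp : p ≠ 0) {h e : M}
    (he : h * e = 1) (g : M) (a b : ℕ) :
    g ^ (p * a + (p + 1)) * h ^ (p * b + (p - 1)) = (g ^ (a + 1) * h ^ (b + 1)) ^ p * (g * e) := by
  have hg : g ^ (p * a + (p + 1)) = (g ^ (a + 1)) ^ p * g := by
    rw [← pow_mul, ← pow_succ, add_mul, one_mul, mul_comm, add_assoc]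
  have hh : (h ^ (b + 1)) ^ p * e = h ^ (p * b + (p - 1)) := by
    rw [← pow_mul, show (b + 1) * p = p * b + (p - 1) + 1 by rw [add_mul, one_mul, mul_comm]; omega,
      pow_succ, mul_assoc, he, mul_one]
  rw [hg, ← hh, mul_pow, mul_mul_mul_comm]

namespace PowerSeries

variable {R : Type*} [CommRing R]

/-- The `q`-Pochhammer symbol `(q^(a+1); q)_n`; `qPochhammer 0 n` is `(q;q)_n`. -/
noncomputable def qPochhammer (a n : ℕ) : R⟦X⟧ := ∏ m ∈ range n, (1 - X ^ (a + m + 1))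

lemma qPochhammer_succ (a n : ℕ) :
    (qPochhammer a (n + 1) : R⟦X⟧) = qPochhammer a n * (1 - X ^ (a + n + 1)) :=
  prod_range_succ _ _

lemma qPochhammer_add (a b c : ℕ) :
    (qPochhammer a (b + c) : R⟦X⟧) = qPochhammer a b * qPochhammer (a + b) c := by
  simp only [qPochhammer, prod_range_add, add_assoc]

lemma isUnit_qPochhammer (a n : ℕ) : IsUnit (qPochhammer a n : R⟦X⟧) := by
  simp [isUnit_iff_constantCoeff, qPochhammer]

lemma X_pow_dvd_qPochhammer_sub_one (a n : ℕ) :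
    (X : R⟦X⟧) ^ (a + 1) ∣ qPochhammer a n - 1 := by
  induction n with
  | zero => simp [qPochhammer]
  | succ n ih =>
    rw [qPochhammer_succ, show (qPochhammer a n : R⟦X⟧) * (1 - X ^ (a + n + 1)) - 1
      = (qPochhammer a n - 1) - qPochhammer a n * X ^ (a + n + 1) by ring]
    exact dvd_sub ih (dvd_mul_of_dvd_right (pow_dvd_pow X (by omega)) _)

noncomputable def qBinom : ℕ → ℕ → R⟦X⟧
  | _, 0 => 1
  | 0, _ + 1 => 0
  | n + 1, k + 1 => qBinom n k + X ^ (k + 1) * qBinom n (k + 1)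

@[simp] lemma qBinom_zero_right (n : ℕ) : (qBinom n 0 : R⟦X⟧) = 1 := by
  cases n <;> rfl

lemma qBinom_succ_succ (n k : ℕ) :
    (qBinom (n + 1) (k + 1) : R⟦X⟧) = qBinom n k + X ^ (k + 1) * qBinom n (k + 1) := rfl

lemma qBinom_eq_zero_of_lt {n k : ℕ} (h : n < k) : (qBinom n k : R⟦X⟧) = 0 := by
  induction n generalizing k with
  | zero => obtain ⟨k, rfl⟩ := Nat.exists_eq_add_one.mpr h; rfl
  | succ n ih =>
    obtain ⟨k, rfl⟩ := Nat.exists_eq_add_one.mpr (Nat.zero_lt_of_lt h)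
    rw [qBinom_succ_succ, ih (by omega), ih (by omega), mul_zero, add_zero]

@[simp] lemma qBinom_self (n : ℕ) : (qBinom n n : R⟦X⟧) = 1 := by
  induction n with
  | zero => rfl
  | succ n ih => rw [qBinom_succ_succ, ih, qBinom_eq_zero_of_lt n.lt_succ_self, mul_zero, add_zero]

lemma qBinom_mul_qPochhammer {n k : ℕ} (h : k ≤ n) :
    (qBinom n k : R⟦X⟧) * qPochhammer 0 k * qPochhammer 0 (n - k) = qPochhammer 0 n := by
  induction n generalizing k with
  | zero => obtain rfl := Nat.le_zero.mp h; simp [qPochhammer]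
  | succ n ih =>
    rcases k with _ | k
    · simp [qPochhammer]
    rcases Nat.lt_or_eq_of_le h with h | h
    · obtain ⟨d, hd⟩ : ∃ d, n - k = d + 1 := ⟨n - k - 1, by omega⟩
      have h1 := ih (k := k) (by omega)
      have h2 := ih (k := k + 1) (by omega)
      rw [hd, qPochhammer_succ] at h1
      rw [show n - (k + 1) = d by omega, qPochhammer_succ] at h2
      rw [qBinom_succ_succ, show n + 1 - (k + 1) = d + 1 by omega, qPochhammer_succ,
        qPochhammer_succ, qPochhammer_succ]
      have hX : (X : R⟦X⟧) ^ (k + 1) * X ^ (d + 1) = X ^ (n + 1) := by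
        rw [← pow_add]; congr 1; omega
      linear_combination (1 - X ^ (k + 1)) * h1 + X ^ (k + 1) * (1 - X ^ (d + 1)) * h2
        - qPochhammer 0 n * hX
    · obtain rfl : k = n := by omega
      simp [qPochhammer]

/-- Obtained from the defining Pascal rule by cancelling the unit `(q;q)_{k+1} (q;q)_{n-k}`. -/
lemma qBinom_succ_succ' (n k : ℕ) :
    (qBinom (n + 1) (k + 1) : R⟦X⟧) = qBinom n (k + 1) + X ^ (n - k) * qBinom n k := by
  rcases lt_trichotomy k n with h | rfl | h
  · obtain ⟨d, hd⟩ : ∃ d, n - k = d + 1 := ⟨n - k - 1, by omega⟩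
    have h0 := qBinom_mul_qPochhammer (R := R) (n := n + 1) (k := k + 1) (by omega)
    have h1 := qBinom_mul_qPochhammer (R := R) (n := n) (k := k) (by omega)
    have h2 := qBinom_mul_qPochhammer (R := R) (n := n) (k := k + 1) (by omega)
    rw [show n + 1 - (k + 1) = d + 1 by omega, qPochhammer_succ 0 n] at h0
    rw [hd] at h1 ⊢
    rw [show n - (k + 1) = d by omega] at h2
    refine ((isUnit_qPochhammer 0 (k + 1)).mul (isUnit_qPochhammer 0 (d + 1))).mul_right_cancel ?_
    rw [qPochhammer_succ 0 k, qPochhammer_succ 0 d] at *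
    have hX : (X : R⟦X⟧) ^ (d + 1) * X ^ (k + 1) = X ^ (n + 1) := by
      rw [← pow_add]; congr 1; omega
    linear_combination h0 - (1 - X ^ (d + 1)) * h2 - X ^ (d + 1) * (1 - X ^ (k + 1)) * h1
      + qPochhammer 0 n * hX
  · simp [qBinom_eq_zero_of_lt]
  · simp [qBinom_eq_zero_of_lt, h, Nat.lt_succ_of_lt h]

lemma qPochhammer_mul_qBinom {n k : ℕ} (h : k ≤ n) :
    (qPochhammer 0 n : R⟦X⟧) * qBinom n k = qPochhammer k (n - k) * qPochhammer (n - k) k := by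
  have h1 := qPochhammer_add (R := R) 0 k (n - k)
  have h2 := qPochhammer_add (R := R) 0 (n - k) k
  rw [zero_add, Nat.add_sub_cancel' h] at h1
  rw [zero_add, Nat.sub_add_cancel h] at h2
  refine ((isUnit_qPochhammer 0 k).mul (isUnit_qPochhammer 0 (n - k))).mul_right_cancel ?_
  linear_combination qPochhammer 0 n * qBinom_mul_qPochhammer (R := R) h
    + qPochhammer 0 (n - k) * qPochhammer (n - k) k * h1 + qPochhammer 0 n * h2

/-- For `n = 2c`, the sum side of a finite form of the Jacobi triple product. -/
noncomputable def jacobiSum (n c : ℕ) : R⟦X⟧ :=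
  ∑ i ∈ range (n + 1), X ^ triangular ((i : ℤ) - c) * qBinom n i

lemma jacobiSum_succ_succ (n c : ℕ) :
    (jacobiSum (n + 1) (c + 1) : R⟦X⟧) = (1 + X ^ c) * jacobiSum n c := by
  have hshift (i : ℕ) :
      triangular (((i + 1 : ℕ) : ℤ) - (c + 1 : ℕ)) = triangular ((i : ℤ) - c) := by
    congr 1; push_cast; ring
  have hstep (i : ℕ) :
      triangular ((i : ℤ) - c) + (i + 1) = triangular (((i + 1 : ℕ) : ℤ) - c) + c := by
    have h := triangular_add_one ((i : ℤ) - c)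
    rw [show (i : ℤ) - c + 1 = ((i + 1 : ℕ) : ℤ) - c by push_cast; ring] at h
    omega
  have hzero :
      triangular (((0 : ℕ) : ℤ) - (c + 1 : ℕ)) = triangular (((0 : ℕ) : ℤ) - c) + c := by
    have h := triangular_add_one (-(c : ℤ) - 1)
    rw [show -(c : ℤ) - 1 + 1 = ((0 : ℕ) : ℤ) - c by push_cast; ring,
      show -(c : ℤ) - 1 = ((0 : ℕ) : ℤ) - (c + 1 : ℕ) by push_cast; ring] at h
    omega
  calc (jacobiSum (n + 1) (c + 1) : R⟦X⟧)
      = jacobiSum n c + ((∑ i ∈ range (n + 1),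
          X ^ (triangular (((i + 1 : ℕ) : ℤ) - c) + c) * qBinom n (i + 1))
          + X ^ (triangular (((0 : ℕ) : ℤ) - c) + c) * qBinom n 0) := by
        rw [jacobiSum, jacobiSum, sum_range_succ']
        simp only [qBinom_succ_succ, mul_add, sum_add_distrib, hshift, ← hstep, hzero, pow_add,
          qBinom_zero_right, mul_assoc, add_assoc]
    _ = (1 + X ^ c) * jacobiSum n c := by
        rw [← sum_range_succ' (fun j => X ^ (triangular ((j : ℤ) - c) + c) * qBinom n j),
          sum_range_succ, qBinom_eq_zero_of_lt n.lt_succ_self, mul_zero, add_zero, jacobiSum,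
          mul_sum]
        simp only [pow_add, add_mul, one_mul, sum_add_distrib]
        congr 1
        exact sum_congr rfl fun i _ => by ring

lemma jacobiSum_succ_zero (n : ℕ) :
    (jacobiSum (n + 1) 0 : R⟦X⟧) = (1 + X ^ (n + 1)) * jacobiSum n 0 := by
  have hstep (i : ℕ) (hi : i ∈ range (n + 1)) :
      triangular ((i + 1 : ℕ) : ℤ) + (n - i) = triangular (i : ℤ) + (n + 1) := by
    have h := triangular_add_one (i : ℤ)
    push_cast at h ⊢
    rw [mem_range] at hi
    omega
  have hshift : ∑ i ∈ range (n + 1), X ^ triangular ((i + 1 : ℕ) : ℤ) * qBinom n (i + 1)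
      + X ^ triangular ((0 : ℕ) : ℤ) * qBinom n 0 = (jacobiSum n 0 : R⟦X⟧) := by
    rw [← sum_range_succ' (fun j => X ^ triangular (j : ℤ) * qBinom n j), sum_range_succ,
      qBinom_eq_zero_of_lt n.lt_succ_self, mul_zero, add_zero, jacobiSum]
    simp only [Nat.cast_zero, sub_zero]
  calc (jacobiSum (n + 1) 0 : R⟦X⟧)
      = (∑ i ∈ range (n + 1), X ^ triangular ((i + 1 : ℕ) : ℤ) * qBinom n (i + 1)
          + X ^ triangular ((0 : ℕ) : ℤ) * qBinom n 0)
        + ∑ i ∈ range (n + 1), X ^ (triangular ((i + 1 : ℕ) : ℤ) + (n - i)) * qBinom n i := by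
        rw [jacobiSum, sum_range_succ']
        simp only [Nat.cast_zero, sub_zero, qBinom_succ_succ', qBinom_zero_right, mul_add,
          sum_add_distrib, pow_add, mul_assoc]
        ring
    _ = (1 + X ^ (n + 1)) * jacobiSum n 0 := by
        rw [hshift, sum_congr rfl fun i hi => by rw [hstep i hi], jacobiSum, mul_sum]
        simp only [Nat.cast_zero, sub_zero, pow_add, add_mul, one_mul, sum_add_distrib]
        congr 1
        exact sum_congr rfl fun i _ => by ring

lemma jacobiSum_zero_right (n : ℕ) :
    (jacobiSum n 0 : R⟦X⟧) = ∏ j ∈ range n, (1 + X ^ (j + 1)) := by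
  induction n with
  | zero => simp [jacobiSum, triangular]
  | succ n ih => rw [jacobiSum_succ_zero, ih, prod_range_succ, mul_comm]

lemma jacobiSum_add_self (n c : ℕ) : (jacobiSum (n + c) c : R⟦X⟧)
    = (∏ j ∈ range c, (1 + X ^ j)) * ∏ j ∈ range n, (1 + X ^ (j + 1)) := by
  induction c with
  | zero => simp [jacobiSum_zero_right]
  | succ c ih => rw [← add_assoc, jacobiSum_succ_succ, ih, prod_range_succ]; ring

/-- With `t = triangular (i - N)`, the summand
`q^t (q;q)_{2N} [2N, i]_q = q^t (q^{i+1};q)_{2N-i} (q^{2N-i+1};q)_i` differs from `q^t` only in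
degrees `≥ t + min(i, 2N - i) + 1 ≥ N`. -/
lemma X_pow_dvd_qPochhammer_mul_jacobiSum_sub (N : ℕ) :
    (X : R⟦X⟧) ^ N ∣ qPochhammer 0 (2 * N) * jacobiSum (2 * N) N
      - ∑ i ∈ range (2 * N + 1), X ^ triangular ((i : ℤ) - N) := by
  rw [jacobiSum, mul_sum, ← sum_sub_distrib]
  refine dvd_sum fun i hi => ?_
  have hi : i ≤ 2 * N := Nat.lt_succ_iff.mp (mem_range.mp hi)
  set t := triangular ((i : ℤ) - N)
  have ht := abs_le_triangular_add_one ((i : ℤ) - N)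
  rw [abs_le] at ht
  have hA := X_pow_dvd_qPochhammer_sub_one (R := R) i (2 * N - i)
  have hB := X_pow_dvd_qPochhammer_sub_one (R := R) (2 * N - i) i
  rw [mul_left_comm, qPochhammer_mul_qBinom hi]
  set A : R⟦X⟧ := qPochhammer i (2 * N - i)
  set B : R⟦X⟧ := qPochhammer (2 * N - i) i
  rw [show X ^ t * (A * B) - X ^ t = X ^ t * A * (B - 1) + X ^ t * (A - 1) by ring]
  refine dvd_add ((pow_dvd_pow X (?_ : N ≤ t + (2 * N - i + 1))).trans ?_)
    ((pow_dvd_pow X (?_ : N ≤ t + (i + 1))).trans ?_)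
  · omega
  · rw [pow_add, mul_assoc]; exact mul_dvd_mul_left _ (dvd_mul_of_dvd_right hB _)
  · omega
  · rw [pow_add]; exact mul_dvd_mul_left _ hA

lemma coeff_qPochhammer_mul_jacobiSum_eq_zero {N l : ℕ} (hl : l < N)
    (htri : ∀ x : ℤ, triangular x ≠ l) :
    coeff l (qPochhammer 0 (2 * N) * jacobiSum (2 * N) N : R⟦X⟧) = 0 := by
  have h := X_pow_dvd_iff.mp (X_pow_dvd_qPochhammer_mul_jacobiSum_sub (R := R) N) l hl
  rw [map_sub, sub_eq_zero, map_sum] at h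
  rw [h]
  exact sum_eq_zero fun i _ => by rw [coeff_X_pow, if_neg (htri _).symm]

lemma invOfUnit_one_sub_X_pow_mul {a : ℕ} (ha : a ≠ 0) :
    invOfUnit (1 - X ^ a : R⟦X⟧) 1 * (1 - X ^ a) = 1 :=
  invOfUnit_mul _ _ (by simp [ha])

/-- `(q²;q²)_M / (q;q²)_M`, a truncation of Ramanujan's `ψ(q) = ∑_{t ≥ 0} q^{t(t+1)/2}`. -/
noncomputable def psiProd (M : ℕ) : R⟦X⟧ :=
  ∏ m ∈ range M, (invOfUnit (1 - X ^ (2 * m + 1)) 1 * (1 - X ^ (2 * m + 2)))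

lemma qPochhammer_zero_two_mul (M : ℕ) : (qPochhammer 0 (2 * M) : R⟦X⟧)
    = (∏ m ∈ range M, (1 - X ^ (2 * m + 1))) * ∏ m ∈ range M, (1 - X ^ (2 * m + 2)) := by
  rw [qPochhammer, prod_range_two_mul]
  congr 1 <;> exact prod_congr rfl fun m _ => by ring_nf

lemma psiProd_mul_prod_one_sub_X_pow (M : ℕ) :
    (psiProd M : R⟦X⟧) * ∏ m ∈ range M, (1 - X ^ (2 * m + 1))
      = ∏ m ∈ range M, (1 - X ^ (2 * m + 2)) := by
  rw [psiProd, ← prod_mul_distrib]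
  refine prod_congr rfl fun m _ => ?_
  linear_combination (1 - X ^ (2 * m + 2)) * invOfUnit_one_sub_X_pow_mul (R := R)
    (a := 2 * m + 1) (by omega)

lemma prod_one_add_X_pow_mul_qPochhammer (M : ℕ) :
    (∏ j ∈ range M, (1 + X ^ (j + 1))) * (qPochhammer 0 M : R⟦X⟧)
      = ∏ m ∈ range M, (1 - X ^ (2 * m + 2)) := by
  rw [qPochhammer, ← prod_mul_distrib]
  exact prod_congr rfl fun m _ => by ring

lemma X_pow_dvd_qPochhammer_mul_jacobiSum_sub_two_mul_psiProd (M : ℕ) :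
    (X : R⟦X⟧) ^ M ∣ qPochhammer 0 (2 * M) * jacobiSum (2 * M) M - 2 * psiProd M := by
  set π := Ideal.Quotient.mk (Ideal.span {(X : R⟦X⟧) ^ M})
  suffices π (qPochhammer 0 (2 * M) * jacobiSum (2 * M) M) = π (2 * psiProd M) from
    Ideal.mem_span_singleton.mp (Ideal.Quotient.eq.mp this)
  have hDP := qPochhammer_zero_two_mul (R := R) M
  have hψ := psiProd_mul_prod_one_sub_X_pow (R := R) M
  have hEP := prod_one_add_X_pow_mul_qPochhammer (R := R) M
  set D : R⟦X⟧ := ∏ m ∈ range M, (1 - X ^ (2 * m + 1))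
  set P : R⟦X⟧ := ∏ m ∈ range M, (1 - X ^ (2 * m + 2))
  set E : R⟦X⟧ := ∏ j ∈ range M, (1 + X ^ (j + 1))
  have hM : π (qPochhammer 0 M) = π (qPochhammer 0 (2 * M)) := by
    rw [two_mul, qPochhammer_add, map_mul, zero_add, Ideal.Quotient.eq.mpr
      (Ideal.mem_span_singleton.mpr ((pow_dvd_pow X M.le_succ).trans
        (X_pow_dvd_qPochhammer_sub_one (R := R) M M))), map_one, mul_one]
  have hlow : π (∏ j ∈ range M, (1 + X ^ j)) = 2 * π E := by
    have h := prod_range_succ' (fun j => (1 + X ^ j : R⟦X⟧)) M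
    rw [prod_range_succ, pow_zero, one_add_one_eq_two] at h
    have hXM : π (1 + X ^ M) = 1 := by
      rw [map_add, map_one, Ideal.Quotient.eq_zero_iff_mem.mpr (Ideal.mem_span_singleton_self _),
        add_zero]
    rw [← mul_one (π _), ← hXM, ← map_mul, h, map_mul, map_ofNat, mul_comm]
  have hP : IsUnit (π P) := (isUnit_iff_constantCoeff.mpr (by simp [P, map_prod])).map π
  -- Euler: `(-q;q)_M (q;q)_M = (q²;q²)_M` and `(q;q)_M ≡ (q;q)_{2M} = (q;q²)_M (q²;q²)_M`.
  have hEDP : π E * π D * π P = π P := by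
    conv_rhs => rw [← hEP, map_mul, hM, hDP, map_mul]
    ring
  have hED : π E * π D = 1 := hP.mul_right_cancel (by rw [one_mul, hEDP])
  rw [two_mul, jacobiSum_add_self, ← two_mul, map_mul, map_mul, hlow, hDP, map_mul, map_mul, ← hψ,
    map_mul, map_ofNat]
  linear_combination (2 * π (psiProd M) * (π E * π D + 1)) * hED

lemma coeff_psiProd_eq_zero {M b : ℕ} (hb : b < M) (htri : ∀ x : ℤ, triangular x ≠ b) :
    coeff b (psiProd M : ℤ⟦X⟧) = 0 := by
  have h := X_pow_dvd_iff.mp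
    (X_pow_dvd_qPochhammer_mul_jacobiSum_sub_two_mul_psiProd (R := ℤ) M) b hb
  rw [map_sub, coeff_qPochhammer_mul_jacobiSum_eq_zero hb htri, two_mul, map_add] at h
  omega

lemma pow_card_eq_expand {p : ℕ} [Fact p.Prime] (f : (ZMod p)⟦X⟧) :
    f ^ p = expand p (Fact.out : p.Prime).ne_zero f := by
  rw [← MvPowerSeries.map_frobenius_expand (R := ZMod p) (σ := Unit) p (Fact.out : p.Prime).ne_zero,
    ZMod.frobenius_zmod]
  rfl

lemma coeff_pow_mul_modEq_zero {p : ℕ} (hp : p.Prime) (A B : ℤ⟦X⟧) {N : ℕ}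
    (hB : ∀ b ≤ N, b ≡ N [MOD p] → coeff b B = 0) : coeff N (A ^ p * B) ≡ 0 [ZMOD p] := by
  have := Fact.mk hp
  rw [← ZMod.intCast_eq_intCast_iff, Int.cast_zero, ← eq_intCast (Int.castRingHom _), ← coeff_map,
    map_mul, map_pow, pow_card_eq_expand, coeff_mul]
  refine sum_eq_zero fun x hx => ?_
  rw [HasAntidiagonal.mem_antidiagonal] at hx
  by_cases hdvd : p ∣ x.1
  · obtain ⟨c, hc⟩ := hdvd
    rw [coeff_map, hB x.2 (by omega) (by rw [← hx, hc, Nat.ModEq, Nat.mul_add_mod]), map_zero,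
      mul_zero]
  · rw [coeff_expand_of_not_dvd _ _ _ hdvd, zero_mul]

end PowerSeries

lemma colorPart_eq_coeff_pow_mul_psiProd {p : ℕ} (hp : p ≠ 0) (a b N : ℕ) :
    colorPart (p * b + (p - 1)) (p * a + (p + 1)) N = coeff N
      ((∏ m ∈ range (N + 1), invOfUnit (1 - X ^ (2 * m + 1)) 1 ^ (a + 1) *
        invOfUnit (1 - X ^ (2 * m + 2)) 1 ^ (b + 1)) ^ p * psiProd (N + 1)) := by
  rw [colorPart, prod_congr rfl fun m _ => pow_mul_pow_eq_pow_mul hp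
    (invOfUnit_one_sub_X_pow_mul (by omega)) _ a b, prod_mul_distrib, prod_pow, psiProd]

theorem stmt11_general (p : ℕ) (hp : p.Prime)
    (r : ℕ)
    (hqnr : ∀ x : ℤ, ¬ x ^ 2 ≡ (8 * r + 1 : ℕ) [ZMOD p])
    (n j k : ℕ) :
    colorPart (p * (k - j) + (p - 1)) (p * k + (p + 1)) (p * n + r) ≡ 0 [ZMOD p] := by
  rw [colorPart_eq_coeff_pow_mul_psiProd hp.ne_zero]
  refine coeff_pow_mul_modEq_zero hp _ _ fun b hb hbN =>
    coeff_psiProd_eq_zero (Nat.lt_succ_of_le hb) fun x hx => hqnr (2 * x + 1) ?_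
  have hbr : b ≡ r [MOD p] := hbN.trans (by simp [Nat.ModEq])
  rw [sq_eq_eight_mul_triangular_add_one, hx]
  push_cast
  exact ((Int.natCast_modEq_iff.mpr hbr).mul_left 8).add_right 1

theorem stmt11 (p : ℕ) (hp : p.Prime) (hp3 : 3 ≤ p)
    (r : ℕ) (hr1 : 1 ≤ r) (hr2 : r ≤ p - 1)
    (hqnr : ∀ x : ℤ, ¬ x ^ 2 ≡ (8 * r + 1 : ℕ) [ZMOD p])
    (n j k : ℕ) (hjk : j ≤ k) :
    colorPart (p * (k - j) + (p - 1)) (p * k + (p + 1)) (p * n + r) ≡ 0 [ZMOD p] :=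
  stmt11_general p hp r hqnr n j k
end
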